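/- arXiv:1710.08487 — 7 statements merged into one kernel-verified Lean document; each statement's English description precedes it below -/
import Mathlib

section
/- Let A, C₁, C₂ be real numbers with C₂ < C₁ < 0 and A ≥ -C₂ (i.e. A ≥ |C₂|). Then there exists θ ∈ (0,1), depending only on A, C₁, C₂, such that: for every N ∈ ℕ⁺ and every finite sequence of real numbers a₁, …, a_N satisfying (1) |a_j| ≤ A for j = 1, …, N and (2) ∑_{j=1}^{N} a_j ≤ N·C₂, there exist an integer l with l ≥ θ·N and indices 1 ≤ n₁ < n₂ < … < n_l ≤ N such that ∑_{j=n+1}^{n_i} a_j ≤ (n_i − n)·C₁ for every integer n with 0 ≤ n < n_i and every i = 1, 2, …, l. -/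
/-- **Pliss Lemma.** Given `A`, `C₂ < C₁ < 0` with `A ≥ -C₂`, there is `θ ∈ (0,1)`,
depending only on `A, C₁, C₂`, such that any finite sequence `a₁, …, a_N` with
`|a_j| ≤ A` and `∑ a_j ≤ N·C₂` has at least `θ·N` Pliss times at level `C₁`:
indices `1 ≤ n₁ < ⋯ < n_l ≤ N` with `∑_{j=n+1}^{n_i} a_j ≤ (n_i - n)·C₁`
for every `0 ≤ n < n_i`. -/
theorem pliss_lemma (A C₁ C₂ : ℝ) (hC₂₁ : C₂ < C₁) (hC₁ : C₁ < 0) (hA : A ≥ -C₂) :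
    ∃ θ : ℝ, θ ∈ Set.Ioo (0 : ℝ) 1 ∧
      ∀ (N : ℕ), 0 < N → ∀ a : ℕ → ℝ,
        (∀ j : ℕ, 1 ≤ j → j ≤ N → |a j| ≤ A) →
        (∑ j ∈ Finset.Icc 1 N, a j ≤ (N : ℝ) * C₂) →
        ∃ (l : ℕ) (n : ℕ → ℕ),
          (θ * (N : ℝ) ≤ (l : ℝ)) ∧
          StrictMonoOn n (Set.Icc 1 l) ∧
          (∀ i : ℕ, 1 ≤ i → i ≤ l → 1 ≤ n i ∧ n i ≤ N) ∧
          (∀ i : ℕ, 1 ≤ i → i ≤ l → ∀ k : ℕ, k < n i →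
            ∑ j ∈ Finset.Icc (k + 1) (n i), a j ≤ ((n i : ℝ) - (k : ℝ)) * C₁) := by
  classical
  have hAC₁ : 0 < A + C₁ := by linarith
  have hD : 0 < A + 2*C₁ - C₂ := by linarith
  refine ⟨(C₁ - C₂)/(A + 2*C₁ - C₂), ⟨div_pos (by linarith) hD, ?_⟩, ?_⟩
  · rw [div_lt_one hD]; linarith
  intro N hN a ha hsum
  set T : ℕ → ℝ := fun n => (∑ j ∈ Finset.Ioc 0 n, a j) - n * C₁ with hTdef
  set P : Finset ℕ := (Finset.Icc 1 N).filter (fun n => ∀ k < n, T n ≤ T k) with hPdef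
  set l := P.card with hl
  -- running minimum
  let M : ℕ → ℝ := fun n => Nat.rec (T 0) (fun k Mk => min Mk (T (k+1))) n
  have hM0 : M 0 = T 0 := rfl
  have hMs : ∀ n, M (n+1) = min (M n) (T (n+1)) := fun n => rfl
  have hT0 : T 0 = 0 := by simp [hTdef]
  -- M n ≤ T k for k ≤ n
  have fact1 : ∀ n, ∀ k ≤ n, M n ≤ T k := by
    intro n
    induction n with
    | zero => intro k hk; rw [Nat.le_zero.mp hk, hM0]
    | succ m ih =>
      intro k hk
      rcases Nat.le_succ_iff.mp hk with h | h
      · exact (min_le_left _ _).trans (ih k h)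
      · rw [h, hMs]; exact min_le_right _ _
  -- successive difference of T
  have hTstep : ∀ n, T (n+1) = T n + (a (n+1) - C₁) := by
    intro n
    simp only [hTdef]
    rw [Finset.sum_Ioc_succ_top (Nat.zero_le n)]
    push_cast
    ring
  -- drop bound
  have fact2 : ∀ n, n + 1 ≤ N → M n - (A + C₁) ≤ M (n+1) := by
    intro n hn
    rw [hMs]
    have h1 : -A ≤ a (n+1) := (abs_le.mp (ha (n+1) (Nat.le_add_left 1 n) hn)).1
    have h2 : M n ≤ T n := fact1 n n le_rfl
    have h3 : M n - (A + C₁) ≤ T (n+1) := by rw [hTstep]; linarith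
    exact le_min (by linarith) h3
  -- no drop off Pliss times
  have fact3 : ∀ n, n + 1 ≤ N → (n+1) ∉ P → M (n+1) = M n := by
    intro n hn hnP
    rw [hMs]
    apply min_eq_left
    rw [hPdef, Finset.mem_filter] at hnP
    push_neg at hnP
    have hmem : n + 1 ∈ Finset.Icc 1 N := Finset.mem_Icc.mpr ⟨Nat.le_add_left 1 n, hn⟩
    obtain ⟨k, hk, hTk⟩ := hnP hmem
    exact le_of_lt (lt_of_le_of_lt (fact1 n k (Nat.lt_succ_iff.mp hk)) hTk)
  -- counting
  have fact4 : ∀ n ≤ N, -((A + C₁) * ((P.filter (· ≤ n)).card : ℝ)) ≤ M n := by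
    intro n
    induction n with
    | zero =>
      intro _
      have : P.filter (· ≤ 0) = ∅ := by
        apply Finset.filter_false_of_mem
        intro x hx
        rw [hPdef, Finset.mem_filter, Finset.mem_Icc] at hx
        omega
      rw [this, hM0, hT0]
      simp
    | succ m ih =>
      intro hm
      have ihm := ih (by omega)
      have hcard : ((P.filter (· ≤ m + 1)).card : ℝ)
          = ((P.filter (· ≤ m)).card : ℝ) + (if m + 1 ∈ P then 1 else 0) := by
        have hsplit : P.filter (· ≤ m + 1) =
            (P.filter (· ≤ m)) ∪ (P.filter (· = m + 1)) := by
          rw [← Finset.filter_or]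
          apply Finset.filter_congr
          intro x _
          constructor
          · intro h; omega
          · intro h; omega
        have hdisj : Disjoint (P.filter (· ≤ m)) (P.filter (· = m + 1)) := by
          apply Finset.disjoint_filter_filter'
          rw [disjoint_iff_inf_le]
          intro x hx
          simp only [Pi.inf_apply, inf_Prop_eq] at hx
          omega
        rw [hsplit, Finset.card_union_of_disjoint hdisj, Finset.filter_eq']
        by_cases h : m + 1 ∈ P <;> simp [h]
      by_cases hmP : m + 1 ∈ P
      · have := fact2 m hm
        rw [hcard]
        simp only [hmP, if_pos]
        push_cast
        linarith
      · rw [fact3 m hm hmP, hcard]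
        simp only [hmP, if_neg, not_false_iff]
        linarith
  -- final count: N (C₁ - C₂) ≤ (A + C₁) * l
  have hPN : P.filter (· ≤ N) = P := by
    apply Finset.filter_true_of_mem
    intro x hx
    rw [hPdef, Finset.mem_filter, Finset.mem_Icc] at hx
    exact hx.1.2
  have hMN : M N ≤ (N : ℝ) * (C₂ - C₁) := by
    have h1 : M N ≤ T N := fact1 N N le_rfl
    have h2 : T N ≤ (N : ℝ) * C₂ - N * C₁ := by
      simp only [hTdef]
      have : Finset.Ioc 0 N = Finset.Icc 1 N := by rw [← Finset.Icc_add_one_left_eq_Ioc, zero_add]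
      rw [this]
      linarith
    calc M N ≤ (N:ℝ) * C₂ - N * C₁ := h1.trans h2
    _ = (N : ℝ) * (C₂ - C₁) := by ring
  have hcount : (N : ℝ) * (C₁ - C₂) ≤ (A + C₁) * l := by
    have := fact4 N le_rfl
    rw [hPN, ← hl] at this
    nlinarith
  -- the enumeration
  have hlL : 0 ≤ (l : ℝ) := Nat.cast_nonneg l
  let e := P.orderIsoOfFin hl.symm
  refine ⟨l, fun i => if h : i - 1 < l then (e ⟨i - 1, h⟩ : ℕ) else 0, ?_, ?_, ?_, ?_⟩
  · rw [div_mul_eq_mul_div, div_le_iff₀ hD]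
    nlinarith
  · intro i hi j hj hij
    simp only [Set.mem_Icc] at hi hj
    have hi' : i - 1 < l := by omega
    have hj' : j - 1 < l := by omega
    have hij' : (⟨i - 1, hi'⟩ : Fin l) < ⟨j - 1, hj'⟩ := by
      simp only [Fin.mk_lt_mk]; omega
    simp only [dif_pos hi', dif_pos hj']
    exact e.strictMono hij'
  · intro i h1i hil
    have hi' : i - 1 < l := by omega
    simp only [dif_pos hi']
    have hmem : ((e ⟨i - 1, hi'⟩ : P) : ℕ) ∈ (Finset.Icc 1 N).filter (fun n => ∀ k < n, T n ≤ T k) := (e ⟨i - 1, hi'⟩).2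
    have := Finset.mem_Icc.mp (Finset.mem_filter.mp hmem).1
    exact this
  · intro i h1i hil k hk
    have hi' : i - 1 < l := by omega
    simp only [dif_pos hi'] at hk ⊢
    set m : ℕ := ((e ⟨i - 1, hi'⟩ : P) : ℕ) with hm
    have hmem : m ∈ (Finset.Icc 1 N).filter (fun n => ∀ k < n, T n ≤ T k) := (e ⟨i - 1, hi'⟩).2
    have hTle : T m ≤ T k := (Finset.mem_filter.mp hmem).2 k hk
    have hsplit : (∑ j ∈ Finset.Ioc 0 k, a j) + (∑ j ∈ Finset.Ioc k m, a j)
        = ∑ j ∈ Finset.Ioc 0 m, a j :=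
      Finset.sum_Ioc_consecutive _ (Nat.zero_le k) (le_of_lt hk)
    have : Finset.Icc (k+1) m = Finset.Ioc k m := Finset.Icc_add_one_left_eq_Ioc k m
    rw [this]
    simp only [hTdef] at hTle
    have hkm : (k : ℝ) < m := by exact_mod_cast hk
    nlinarith
end

section
/- Let μ < μ₁ < μ₂ < 0 be real numbers and A > -μ₁ (i.e. A > |μ₁|). Let (a_i)_{i≥1} be a sequence of real numbers with |a_i| ≤ A for all i, and suppose there exists m ∈ ℕ⁺ such that ∑_{i=1}^{m} a_i ≤ m·μ and a_{i+m} = a_i for every i ≥ 1 (the sequence is m-periodic). Then there exist θ ∈ (0,1) and N ∈ ℕ such that for every k ≥ N there exist an integer l ≥ θ·k and indices 1 ≤ n₁ < n₂ < … < n_l ≤ k satisfying ∑_{i=n+1}^{n_j} a_i ≤ (n_j − n)·μ₂ for every integer n with 0 ≤ n < n_j and every j = 1, 2, …, l. -/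
open Finset

/-- A bounded `m`-periodic real sequence whose average over one period is at most
`μ < μ₁ < μ₂ < 0` has, for every large enough `k`, at least `θ·k` Pliss times at
level `μ₂` among `{1, …, k}`, for some `θ ∈ (0,1)`. -/
theorem pliss_times_positive_density_periodic (μ μ₁ μ₂ A : ℝ)
    (h₁ : μ < μ₁) (h₂ : μ₁ < μ₂) (h₃ : μ₂ < 0) (hA : A > -μ₁)
    (a : ℕ → ℝ) (hbd : ∀ i : ℕ, 1 ≤ i → |a i| ≤ A)
    (m : ℕ) (hm : 0 < m)
    (hsum : ∑ i ∈ Finset.Icc 1 m, a i ≤ (m : ℝ) * μ)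
    (hper : ∀ i : ℕ, 1 ≤ i → a (i + m) = a i) :
    ∃ θ : ℝ, θ ∈ Set.Ioo (0 : ℝ) 1 ∧ ∃ N : ℕ, ∀ k : ℕ, N ≤ k →
      ∃ (l : ℕ) (n : ℕ → ℕ),
        (θ * (k : ℝ) ≤ (l : ℝ)) ∧
        StrictMonoOn n (Set.Icc 1 l) ∧
        (∀ j : ℕ, 1 ≤ j → j ≤ l → 1 ≤ n j ∧ n j ≤ k) ∧
        (∀ j : ℕ, 1 ≤ j → j ≤ l → ∀ i : ℕ, i < n j →
          ∑ t ∈ Finset.Icc (i + 1) (n j), a t ≤ ((n j : ℝ) - (i : ℝ)) * μ₂) := by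
  classical
  set C : ℝ := A - μ₂ with hC
  have hCpos : 0 < C := by
    have hA0 : 0 < A := by linarith
    simp only [hC]; linarith
  set S : ℕ → ℝ := fun n => ∑ t ∈ Finset.Icc 1 n, a t with hS
  set b : ℕ → ℝ := fun n => S n - n * μ₂ with hb
  have hb0 : b 0 = 0 := by simp [hb, hS]
  have hSsucc : ∀ n : ℕ, S (n + 1) = S n + a (n + 1) := by
    intro n
    simp [hS, Finset.sum_Icc_succ_top (by omega : 1 ≤ n + 1)]
  -- single-step lower bound
  have hstep : ∀ n : ℕ, b n - C ≤ b (n + 1) := by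
    intro n
    have h2 : -A ≤ a (n + 1) := (abs_le.mp (hbd (n + 1) (by omega))).1
    simp only [hb, hSsucc n]
    push_cast
    linarith
  -- every length-m window has sum S m
  have hwin : ∀ n : ℕ, ∑ t ∈ Finset.Icc (n + 1) (n + m), a t = S m := by
    intro n
    induction n with
    | zero => simp [hS]
    | succ n ih =>
      have e1 : ∑ t ∈ Finset.Icc (n + 1) (n + 1 + m), a t
          = a (n + 1) + ∑ t ∈ Finset.Icc (n + 2) (n + 1 + m), a t := by
        rw [show Finset.Icc (n + 2) (n + 1 + m) = Finset.Ioc (n + 1) (n + 1 + m) from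
          (Finset.Icc_add_one_left_eq_Ioc _ _), Finset.Icc_eq_cons_Ioc (by omega), Finset.sum_cons]
      have e2 : ∑ t ∈ Finset.Icc (n + 1) (n + 1 + m), a t
          = ∑ t ∈ Finset.Icc (n + 1) (n + m), a t + a (n + m + 1) := by
        rw [show n + 1 + m = (n + m) + 1 by omega,
          Finset.sum_Icc_succ_top (by omega : n + 1 ≤ n + m + 1)]
      have e3 : a (n + m + 1) = a (n + 1) := by
        rw [show n + m + 1 = (n + 1) + m by omega]
        exact hper (n + 1) (by omega)
      have : ∑ t ∈ Finset.Icc ((n+1) + 1) ((n+1) + m), a t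
          = ∑ t ∈ Finset.Icc (n + 1) (n + m), a t := by
        rw [show (n+1)+1 = n+2 by omega, show (n+1)+m = n+1+m by omega]
        linarith [e1, e2, e3.symm ▸ e1]
      rw [this, ih]
  -- drop over one period
  have hdrop : ∀ n : ℕ, b (n + m) ≤ b n - (m : ℝ) * (μ₂ - μ) := by
    intro n
    have hsplit : S n + ∑ t ∈ Finset.Icc (n + 1) (n + m), a t = S (n + m) := by
      have := Finset.sum_Ioc_consecutive a (Nat.zero_le n) (Nat.le_add_right n m)
      simpa [hS, ← Finset.Icc_add_one_left_eq_Ioc] using this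
    have h1 : ∑ t ∈ Finset.Icc (n + 1) (n + m), a t ≤ (m : ℝ) * μ := by
      rw [hwin n]; exact hsum
    simp only [hb]
    push_cast
    nlinarith
  set δ : ℝ := (m : ℝ) * (μ₂ - μ) with hδ
  have hδpos : 0 < δ := by
    have : (0:ℝ) < m := by exact_mod_cast hm
    simp only [hδ]; nlinarith
  have hbm : ∀ j : ℕ, b (j * m) ≤ -(j : ℝ) * δ := by
    intro j
    induction j with
    | zero => simp [hb0]
    | succ j ih =>
      have := hdrop (j * m)
      have e : (j + 1) * m = j * m + m := by ring
      rw [e]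
      push_cast
      linarith
  have hlow : ∀ n : ℕ, -(n : ℝ) * C ≤ b n := by
    intro n
    induction n with
    | zero => simp [hb0]
    | succ n ih =>
      have := hstep n
      push_cast
      linarith
  have hdelC : μ₂ - μ ≤ C := by
    have h1 := hlow m
    have h2 := hbm 1
    simp only [one_mul, Nat.cast_one, neg_mul, one_mul] at h2
    have hm' : (0:ℝ) < m := by exact_mod_cast hm
    nlinarith
  -- Pliss set
  set P : ℕ → Finset ℕ := fun k => (Finset.Icc 1 k).filter (fun n => ∀ i, i < n → b n ≤ b i)
    with hP
  have hne : ∀ k : ℕ, (Finset.Icc 0 k).Nonempty := fun k => ⟨0, by simp⟩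
  set M : ℕ → ℝ := fun k => (Finset.Icc 0 k).inf' (hne k) b with hM
  have hMle : ∀ k i : ℕ, i ≤ k → M k ≤ b i := by
    intro k i hik
    exact Finset.inf'_le b (by simp [hik])
  have hkey : ∀ k : ℕ, -C * (P k).card ≤ M k := by
    intro k
    induction k with
    | zero =>
      have : P 0 = ∅ := by simp [hP]
      rw [this]
      have : M 0 = b 0 := by simp [hM]
      rw [this, hb0]
      simp
    | succ k ih =>
      have hIcc0 : Finset.Icc 0 (k + 1) = insert (k + 1) (Finset.Icc 0 k) := by
        rw [← Finset.insert_Icc_right_eq_Icc_add_one (by omega)]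
      have hMsucc : M (k + 1) = b (k + 1) ⊓ M k := by
        simp only [hM, hIcc0]
        rw [Finset.inf'_insert (hne k)]
      have hIcc1 : Finset.Icc 1 (k + 1) = insert (k + 1) (Finset.Icc 1 k) := by
        rw [← Finset.insert_Icc_right_eq_Icc_add_one (by omega)]
      have hbk : M k ≤ b k := hMle k k le_rfl
      by_cases hp : ∀ i, i < k + 1 → b (k + 1) ≤ b i
      · have hPs : P (k + 1) = insert (k + 1) (P k) := by
          simp only [hP, hIcc1, Finset.filter_insert, if_pos hp]
        have hnm : (k + 1) ∉ P k := by
          intro h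
          have := Finset.mem_of_mem_filter _ h
          simp at this
        rw [hPs, Finset.card_insert_of_notMem hnm, hMsucc]
        push_cast
        refine le_inf ?_ ?_
        · have := hstep k
          nlinarith
        · nlinarith
      · push_neg at hp
        obtain ⟨i, hik, hbi⟩ := hp
        have hPs : P (k + 1) = P k := by
          simp only [hP, hIcc1, Finset.filter_insert]
          rw [if_neg]
          push_neg
          exact ⟨i, hik, hbi⟩
        have hMk : M k ≤ b (k + 1) := le_of_lt (lt_of_le_of_lt (hMle k i (by omega)) hbi)
        rw [hPs, hMsucc]
        exact le_inf (le_trans ih hMk) ih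
  -- the density
  refine ⟨(μ₂ - μ) / (2 * C), ⟨div_pos (by linarith) (by linarith), by rw [div_lt_one (by linarith)]; linarith⟩,
    2 * m, ?_⟩
  intro k hk
  set s : Finset ℕ := P k with hs
  set l : ℕ := s.card with hl
  set f : Fin l ↪o ℕ := s.orderEmbOfFin rfl with hf
  refine ⟨l, fun j => if h : j - 1 < l then f ⟨j - 1, h⟩ else 0, ?_, ?_, ?_, ?_⟩
  · -- density estimate
    have h1 : -C * (l : ℝ) ≤ M k := hkey k
    have h2 : M k ≤ b (k / m * m) := hMle k _ (by simpa using Nat.div_mul_le_self k m)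
    have h3 := hbm (k / m)
    have hdm := Nat.div_add_mod k m
    have hmod := Nat.mod_lt k hm
    have hnat : k ≤ 2 * (m * (k / m)) := by omega
    have hnat' : (k : ℝ) ≤ 2 * (m * (k / m : ℕ)) := by exact_mod_cast hnat
    have hcl : (k / m : ℕ) * δ ≤ C * l := by nlinarith
    rw [div_mul_eq_mul_div, div_le_iff₀ (by positivity)]
    have hm' : (0:ℝ) < m := by exact_mod_cast hm
    simp only [hδ] at hcl
    nlinarith
  · -- strict mono
    intro x hx y hy hxy
    obtain ⟨hx1, hx2⟩ := hx
    obtain ⟨hy1, hy2⟩ := hy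
    have hxl : x - 1 < l := by omega
    have hyl : y - 1 < l := by omega
    simp only [dif_pos hxl, dif_pos hyl]
    exact f.strictMono (by simp [Fin.lt_def]; omega)
  · -- range
    intro j hj1 hj2
    have hjl : j - 1 < l := by omega
    simp only [dif_pos hjl]
    have hmem : f ⟨j - 1, hjl⟩ ∈ s := Finset.orderEmbOfFin_mem s rfl _
    have := Finset.mem_of_mem_filter _ hmem
    simpa using this
  · -- Pliss inequality
    intro j hj1 hj2 i hi
    have hjl : j - 1 < l := by omega
    simp only [dif_pos hjl] at hi ⊢
    set q : ℕ := f ⟨j - 1, hjl⟩ with hq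
    have hmem : q ∈ s := Finset.orderEmbOfFin_mem s rfl _
    clear_value q
    have hfil : ∀ i', i' < q → b q ≤ b i' := (Finset.mem_filter.mp hmem).2
    have hbi := hfil i hi
    have hsplit : S i + ∑ t ∈ Finset.Icc (i + 1) q, a t = S q := by
      have := Finset.sum_Ioc_consecutive a (Nat.zero_le i) (le_of_lt hi)
      simpa [hS, ← Finset.Icc_add_one_left_eq_Ioc] using this
    simp only [hb] at hbi
    have hex : ((q : ℝ) - (i : ℝ)) * μ₂ = (q : ℝ) * μ₂ - (i : ℝ) * μ₂ := by ring
    linarith only [hbi, hsplit, hex]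
end

section
/- Let (a_i)_{i≥1} be a sequence of real numbers, A > 0 with |a_i| ≤ A for all i, and suppose there exists m ∈ ℕ⁺ with a_{i+m} = a_i for every i ≥ 1 and ∑_{i=1}^{m} a_i ≤ m·μ for some μ < 0. Then for every μ₂ with μ < μ₂ < 0, the set of integers n ≥ 1 such that ∑_{i=k+1}^{n} a_i ≤ (n − k)·μ₂ for every integer k with 0 ≤ k < n is infinite. -/
/-- A bounded `m`-periodic real sequence whose sum over one period is at most
`m·μ` with `μ < 0` has infinitely many Pliss times at every level `μ₂` with
`μ < μ₂ < 0`. -/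
theorem infinitely_many_pliss_times_of_periodic (a : ℕ → ℝ) (A : ℝ) (hA : 0 < A)
    (hbd : ∀ i : ℕ, 1 ≤ i → |a i| ≤ A)
    (m : ℕ) (hm : 0 < m) (hper : ∀ i : ℕ, 1 ≤ i → a (i + m) = a i)
    (μ : ℝ) (hμ : μ < 0) (hsum : ∑ i ∈ Finset.Icc 1 m, a i ≤ (m : ℝ) * μ) :
    ∀ μ₂ : ℝ, μ < μ₂ → μ₂ < 0 →
      {n : ℕ | 1 ≤ n ∧ ∀ k : ℕ, k < n →
        ∑ i ∈ Finset.Icc (k + 1) n, a i ≤ ((n : ℝ) - (k : ℝ)) * μ₂}.Infinite := by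
  classical
  intro μ₂ hμμ₂ hμ₂
  set S : ℕ → ℝ := fun n => (∑ i ∈ Finset.Ioc 0 n, a i) - n * μ₂ with hSdef
  have hIcc : ∀ n : ℕ, Finset.Icc 1 n = Finset.Ioc 0 n := by
    intro n
    ext x
    simp [Nat.lt_iff_add_one_le]
  -- periodicity of block sums
  have hper' : ∀ n : ℕ, ∑ i ∈ Finset.Ioc n (n + m), a i = ∑ i ∈ Finset.Ioc 0 m, a i := by
    intro n
    induction n with
    | zero => simp
    | succ n ih =>
      have h1 : (∑ i ∈ Finset.Ioc n (n + 1), a i) + ∑ i ∈ Finset.Ioc (n + 1) (n + 1 + m), a i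
          = ∑ i ∈ Finset.Ioc n (n + 1 + m), a i :=
        Finset.sum_Ioc_consecutive _ (by omega) (by omega)
      have hsing : Finset.Ioc n (n + 1) = {n + 1} := by
        ext x; simp
      have h2 : ∑ i ∈ Finset.Ioc n (n + m + 1), a i
          = (∑ i ∈ Finset.Ioc n (n + m), a i) + a (n + m + 1) :=
        Finset.sum_Ioc_succ_top (by omega) _
      have h3 : a (n + m + 1) = a (n + 1) := by
        have := hper (n + 1) (by omega)
        have e : n + 1 + m = n + m + 1 := by omega
        rw [e] at this
        exact this
      have e : n + 1 + m = n + m + 1 := by omega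
      rw [e] at h1
      rw [hsing, Finset.sum_singleton] at h1
      rw [e]
      linarith
  have hsum' : ∑ i ∈ Finset.Ioc 0 m, a i ≤ (m : ℝ) * μ := by
    rw [← hIcc]; exact hsum
  have hstep : ∀ n : ℕ, S (n + m) ≤ S n + ((m : ℝ) * μ - (m : ℝ) * μ₂) := by
    intro n
    have h1 : (∑ i ∈ Finset.Ioc 0 n, a i) + ∑ i ∈ Finset.Ioc n (n + m), a i
        = ∑ i ∈ Finset.Ioc 0 (n + m), a i :=
      Finset.sum_Ioc_consecutive _ (by omega) (by omega)
    have h2 := hper' n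
    simp only [hSdef]
    push_cast
    linarith
  have hd : (m : ℝ) * μ - (m : ℝ) * μ₂ < 0 := by
    have hm' : (0 : ℝ) < m := by exact_mod_cast hm
    nlinarith
  have hiter : ∀ j : ℕ, S (j * m) ≤ (j : ℝ) * ((m : ℝ) * μ - (m : ℝ) * μ₂) := by
    intro j
    induction j with
    | zero => simp [hSdef]
    | succ j ih =>
      have : (j + 1) * m = j * m + m := by ring
      rw [this]
      have := hstep (j * m)
      push_cast
      linarith
  have hunbdd : ∀ c : ℝ, ∃ n : ℕ, S n < c := by
    intro c
    obtain ⟨j, hj⟩ := exists_nat_gt (c / ((m : ℝ) * μ - (m : ℝ) * μ₂))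
    refine ⟨j * m, lt_of_le_of_lt (hiter j) ?_⟩
    exact (div_lt_iff_of_neg hd).mp hj
  -- main: unbounded set of record times
  apply Set.infinite_of_not_bddAbove
  rintro ⟨N, hN⟩
  -- min of S over [0, N]
  have hne : (Finset.range (N + 1)).Nonempty := ⟨0, by simp⟩
  set c : ℝ := (Finset.range (N + 1)).inf' hne S with hc
  obtain ⟨n₀, hn₀⟩ := hunbdd c
  have hex : ∃ n : ℕ, S n < c := ⟨n₀, hn₀⟩
  set n : ℕ := Nat.find hex with hn
  have hSn : S n < c := Nat.find_spec hex
  have hmin : ∀ k, k < n → c ≤ S k := by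
    intro k hk
    have := Nat.find_min hex hk
    linarith [not_lt.mp this]
  have hNn : N < n := by
    by_contra h
    push_neg at h
    have : c ≤ S n := Finset.inf'_le S (by simp; omega)
    linarith
  have hmem : n ∈ {n : ℕ | 1 ≤ n ∧ ∀ k : ℕ, k < n →
      ∑ i ∈ Finset.Icc (k + 1) n, a i ≤ ((n : ℝ) - (k : ℝ)) * μ₂} := by
    constructor
    · omega
    · intro k hk
      have hck : c ≤ S k := hmin k hk
      have hsplit : (∑ i ∈ Finset.Ioc 0 k, a i) + ∑ i ∈ Finset.Ioc k n, a i
          = ∑ i ∈ Finset.Ioc 0 n, a i :=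
        Finset.sum_Ioc_consecutive _ (by omega) (by omega)
      have hIccIoc : Finset.Icc (k + 1) n = Finset.Ioc k n := by
        ext x; simp only [Finset.mem_Icc, Finset.mem_Ioc]; omega
      rw [hIccIoc]
      have hSk : S n ≤ S k := le_trans (le_of_lt hSn) hck
      simp only [hSdef] at hSk
      linarith
  exact absurd (hN hmem) (by omega)
end

section
/- Let C₂ < C₁ < 0 be real numbers and let (a_i)_{i≥1} be a sequence of real numbers such that there exists m ∈ ℕ⁺ with a_{i+m} = a_i for every i ≥ 1 and ∑_{i=1}^{m} a_i ≤ m·C₂. Then there exists an integer s with 0 ≤ s ≤ m − 1 such that ∑_{i=s+1}^{s+n} a_i ≤ n·C₁ for every integer n ≥ 1. -/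
/-- Any `m`-periodic real sequence whose sum over one period is at most
`m·C₂ < m·C₁ < 0` admits a starting index `s` within the first period from
which all forward partial sums grow at rate at most `C₁`. -/
theorem exists_good_starting_index_of_periodic (C₁ C₂ : ℝ) (h₁ : C₂ < C₁) (h₂ : C₁ < 0)
    (a : ℕ → ℝ) (m : ℕ) (hm : 0 < m)
    (hper : ∀ i : ℕ, 1 ≤ i → a (i + m) = a i)
    (hsum : ∑ i ∈ Finset.Icc 1 m, a i ≤ (m : ℝ) * C₂) :
    ∃ s : ℕ, s ≤ m - 1 ∧ ∀ n : ℕ, 1 ≤ n →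
      ∑ i ∈ Finset.Icc (s + 1) (s + n), a i ≤ (n : ℝ) * C₁ := by
  set T : ℕ → ℝ := fun n => ∑ i ∈ Finset.Ioc 0 n, a i with hT
  set f : ℕ → ℝ := fun k => T k - k * C₁ with hf
  have hIcc : ∀ u v : ℕ, Finset.Icc (u + 1) v = Finset.Ioc u v := by
    intro u v; ext x; simp only [Finset.mem_Icc, Finset.mem_Ioc]; omega
  have hTm : T m ≤ (m : ℝ) * C₂ := by
    rw [hT]; simpa [← hIcc 0 m] using hsum
  have hshift : ∀ n : ℕ, ∑ i ∈ Finset.Ioc m (m + n), a i = T n := by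
    intro n
    have : Finset.Ioc m (m + n) = (Finset.Ioc 0 n).map (addRightEmbedding m) := by
      rw [Finset.map_add_right_Ioc]; simp [Nat.add_comm]
    rw [this, Finset.sum_map]
    refine Finset.sum_congr rfl fun i hi => ?_
    have h1 : 1 ≤ i := (Finset.mem_Ioc.mp hi).1
    simpa [addRightEmbedding] using hper i h1
  have hkey : ∀ n : ℕ, T (n + m) = T n + T m := by
    intro n
    have h1 : (0:ℕ) ≤ m := Nat.zero_le m
    have h2 : m ≤ m + n := Nat.le_add_right m n
    have := Finset.sum_Ioc_consecutive a h1 h2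
    calc T (n + m) = T (m + n) := by rw [Nat.add_comm]
      _ = ∑ i ∈ Finset.Ioc 0 m, a i + ∑ i ∈ Finset.Ioc m (m + n), a i := by
            rw [hT]; exact this.symm
      _ = T n + T m := by rw [hshift n]; ring
  obtain ⟨s, hs, hmax⟩ := (Finset.range m).exists_max_image f ⟨0, Finset.mem_range.mpr hm⟩
  have hsm : s < m := Finset.mem_range.mp hs
  have hfm : T m - (m : ℝ) * C₁ ≤ 0 := by
    have : (m : ℝ) * C₂ ≤ (m : ℝ) * C₁ :=
      mul_le_mul_of_nonneg_left h₁.le (Nat.cast_nonneg m)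
    linarith
  have hall : ∀ k : ℕ, f k ≤ f s := by
    intro k
    induction k using Nat.strong_induction_on with
    | _ k ih =>
      rcases lt_or_ge k m with h | h
      · exact hmax k (Finset.mem_range.mpr h)
      · have hk : k = (k - m) + m := (Nat.sub_add_cancel h).symm
        have hlt : k - m < k := Nat.sub_lt (lt_of_lt_of_le hm h) hm
        have ht : T k = T (k - m) + T m := by
          have := hkey (k - m); rwa [Nat.sub_add_cancel h] at this
        have : f k = f (k - m) + (T m - (m : ℝ) * C₁) := by
          show T k - (k : ℝ) * C₁ = (T (k - m) - ((k - m : ℕ) : ℝ) * C₁) + (T m - (m : ℝ) * C₁)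
          rw [ht, Nat.cast_sub h]
          ring
        rw [this]
        linarith [ih (k - m) hlt]
  refine ⟨s, Nat.le_pred_of_lt hsm, fun n hn => ?_⟩
  have h1 : f (s + n) ≤ f s := hall (s + n)
  have h2 : T s + ∑ i ∈ Finset.Ioc s (s + n), a i = T (s + n) := by
    rw [hT]
    exact Finset.sum_Ioc_consecutive a (Nat.zero_le s) (Nat.le_add_right s n)
  rw [hIcc s (s + n)]
  simp only [hf, hT] at h1
  push_cast at h1 ⊢
  linarith [h1, h2]
end

section
/- Let X be a compact metric space, f : X → X a continuous map, φ : X → ℝ a continuous strictly positive function, and r ∈ (0,1]. For x ∈ X and n ∈ ℕ⁺, say that the orbit segment (x,n) is an r-obstruction segment if ∏_{j=1}^{k} φ(f^j(x)) ≥ r^k for every k = 1, …, n; say that x is an r-obstruction point if (x,n) is an r-obstruction segment for every n ∈ ℕ⁺. Suppose there is no r-obstruction point in X, i.e. for every x ∈ X there exists n = n(x) ∈ ℕ⁺ with ∏_{j=1}^{n} φ(f^j(x)) < r^n. Then there exists a constant C > 0 such that ∏_{j=1}^{n} φ(f^j(x)) ≤ C·r^n for every x ∈ X and every n ∈ ℕ⁺.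 -/
/-- If there is no `r`-obstruction point (every point has some orbit segment
along which the product of `φ` is smaller than the corresponding power of `r`),
then the products of `φ` along all orbit segments are uniformly dominated by
`C·rⁿ` for some constant `C > 0`. -/
theorem uniform_expansion_of_no_obstruction_point
    {X : Type*} [MetricSpace X] [CompactSpace X]
    (f : X → X) (hf : Continuous f)
    (φ : X → ℝ) (hφ : Continuous φ) (hφpos : ∀ x : X, 0 < φ x)
    (r : ℝ) (hr : r ∈ Set.Ioc (0 : ℝ) 1)
    (hno : ∀ x : X, ∃ n : ℕ, 1 ≤ n ∧ ∏ j ∈ Finset.Icc 1 n, φ (f^[j] x) < r ^ n) :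
    ∃ C : ℝ, 0 < C ∧ ∀ x : X, ∀ n : ℕ, 1 ≤ n →
      ∏ j ∈ Finset.Icc 1 n, φ (f^[j] x) ≤ C * r ^ n := by
  obtain ⟨hr0, hr1⟩ := hr
  set Q : X → ℕ → ℝ := fun x n => ∏ j ∈ Finset.range n, φ (f^[j + 1] x) with hQ
  have hQeq : ∀ x n, ∏ j ∈ Finset.Icc 1 n, φ (f^[j] x) = Q x n := by
    intro x n
    induction n with
    | zero => simp [hQ]
    | succ k ihk =>
      rw [Finset.prod_Icc_succ_top (by omega : 1 ≤ k + 1)]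
      simp only [hQ, Finset.prod_range_succ]
      rw [ihk]
  have hQpos : ∀ x n, 0 < Q x n := fun x n => Finset.prod_pos fun j _ => hφpos _
  have hQsplit : ∀ (x : X) (m k : ℕ), Q x (m + k) = Q x m * Q (f^[m] x) k := by
    intro x m k
    simp only [hQ, Finset.prod_range_add]
    congr 1
    apply Finset.prod_congr rfl
    intro i _
    rw [show m + i + 1 = (i + 1) + m by omega, Function.iterate_add_apply]
  have hQc : ∀ n, Continuous (fun x => Q x n) := by
    intro n
    exact continuous_finset_prod _ fun j _ => hφ.comp (hf.iterate (j + 1))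
  -- finite subcover to get uniform N
  have hUopen : ∀ n : ℕ, IsOpen {x : X | Q x n < r ^ n} :=
    fun n => isOpen_lt (hQc n) continuous_const
  obtain ⟨s, hs⟩ := isCompact_univ.elim_finite_subcover
      (fun n : ℕ => {x : X | Q x n < r ^ n}) hUopen
      (by
        intro x _
        obtain ⟨n, hn1, hn⟩ := hno x
        rw [hQeq] at hn
        exact Set.mem_iUnion.2 ⟨n, hn⟩)
  set N : ℕ := max (s.sup id) 1 with hNdef
  have hN1 : 1 ≤ N := le_max_right _ _
  have hN : ∀ x : X, ∃ m, 1 ≤ m ∧ m ≤ N ∧ Q x m < r ^ m := by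
    intro x
    have := hs (Set.mem_univ x)
    simp only [Set.mem_iUnion, Set.mem_setOf_eq] at this
    obtain ⟨m, hms, hm⟩ := this
    refine ⟨m, ?_, ?_, hm⟩
    · by_contra h
      have hm0 : m = 0 := by omega
      subst hm0
      simp [hQ] at hm
    · exact le_trans (Finset.le_sup (f := id) hms) (le_max_left _ _)
  -- bound on φ
  obtain ⟨B, hB1, hB⟩ : ∃ B : ℝ, 1 ≤ B ∧ ∀ x, φ x ≤ B := by
    rcases isEmpty_or_nonempty X with h | h
    · exact ⟨1, le_refl 1, fun x => (IsEmpty.false x).elim⟩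
    · obtain ⟨x0, -, hx0⟩ := isCompact_univ.exists_isMaxOn Set.univ_nonempty hφ.continuousOn
      exact ⟨max (φ x0) 1, le_max_right _ _,
        fun x => le_trans (hx0 (Set.mem_univ x)) (le_max_left _ _)⟩
  have hB0 : (0 : ℝ) < B := lt_of_lt_of_le one_pos hB1
  set C : ℝ := (B / r) ^ N with hC
  have hCpos : 0 < C := pow_pos (div_pos hB0 hr0) N
  have key : ∀ n : ℕ, ∀ x : X, 1 ≤ n → Q x n ≤ C * r ^ n := by
    intro n
    induction n using Nat.strong_induction_on with
    | _ n ih =>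
      intro x hn
      rcases le_or_gt n N with hle | hlt
      · have h1 : Q x n ≤ B ^ n := by
          calc Q x n ≤ ∏ _j ∈ Finset.range n, B :=
                Finset.prod_le_prod (fun j _ => (hφpos _).le) (fun j _ => hB _)
            _ = B ^ n := by simp
        have hrn : r ^ N ≤ r ^ n := pow_le_pow_of_le_one hr0.le hr1 hle
        have h2 : B ^ n ≤ B ^ N := pow_le_pow_right₀ hB1 hle
        have h3 : B ^ N ≤ C * r ^ n := by
          rw [hC, div_pow, div_mul_eq_mul_div, le_div_iff₀ (pow_pos hr0 N)]
          calc B ^ N * r ^ N ≤ B ^ N * r ^ n :=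
                mul_le_mul_of_nonneg_left hrn (pow_nonneg hB0.le N)
            _ = B ^ N * r ^ n := rfl
        linarith
      · obtain ⟨m, hm1, hmN, hmlt⟩ := hN x
        have hmn : m < n := lt_of_le_of_lt hmN hlt
        have hsplit : Q x n = Q x m * Q (f^[m] x) (n - m) := by
          rw [← hQsplit x m (n - m), show m + (n - m) = n by omega]
        have hrec : Q (f^[m] x) (n - m) ≤ C * r ^ (n - m) :=
          ih (n - m) (by omega) _ (by omega)
        calc Q x n = Q x m * Q (f^[m] x) (n - m) := hsplit
          _ ≤ r ^ m * (C * r ^ (n - m)) :=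
              mul_le_mul hmlt.le hrec (hQpos _ _).le (pow_nonneg hr0.le m)
          _ = C * (r ^ m * r ^ (n - m)) := by ring
          _ = C * r ^ n := by rw [← pow_add, show m + (n - m) = n by omega]
  exact ⟨C, hCpos, fun x n hn => by rw [hQeq]; exact key n x hn⟩
end

section
/- Let E be a real Banach space and f : E → E a continuously differentiable map, and write Df_y for the Fréchet derivative of f at y and ‖Df_y‖ for its operator norm. Let 0 < μ₂ < μ₁ < λ₁ < λ₂ < 1 and suppose there exists r₁ > 0 such that for all u, v ∈ E with ‖u − v‖ ≤ r₁ one has μ₂·‖Df_u‖ ≤ μ₁·‖Df_v‖ and λ₁·‖Df_v‖ ≤ λ₂·‖Df_u‖ (i.e. μ₂/μ₁ ≤ ‖Df_v‖/‖Df_u‖ ≤ λ₂/λ₁ whenever ‖u − v‖ ≤ r₁). Let x ∈ E and C > 0 satisfy C·μ₁^n ≤ ∏_{i=0}^{n−1} ‖Df_{f^i(x)}‖ ≤ C·λ₁^n for every n ∈ ℕ⁺. Then there exist constants C₀ > 0 and r > 0 such that for every y ∈ E with ‖y − x‖ ≤ r and every n ∈ ℕ⁺ one has C₀^{-1}·μ₂^n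 ≤ ∏_{i=0}^{n−1} ‖Df_{f^i(y)}‖ ≤ C₀·λ₂^n. -/
/-- Uniform derivative-norm estimates `C·μ₁ⁿ ≤ ∏_{i<n} ‖Df_{fⁱx}‖ ≤ C·λ₁ⁿ` along
the orbit of `x` persist, with slightly weaker rates `μ₂ < μ₁` and `λ₂ > λ₁`,
at all points of a small ball around `x`, provided the operator norm of the
derivative has uniformly controlled ratios at nearby points. -/
theorem derivative_norm_estimates_persist_on_neighborhood
    {E : Type*} [NormedAddCommGroup E] [NormedSpace ℝ E] [CompleteSpace E]
    (f : E → E) (hf : ContDiff ℝ 1 f)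
    (μ₂ μ₁ lam₁ lam₂ : ℝ)
    (h0 : 0 < μ₂) (h1 : μ₂ < μ₁) (h2 : μ₁ < lam₁) (h3 : lam₁ < lam₂) (h4 : lam₂ < 1)
    (r₁ : ℝ) (hr₁ : 0 < r₁)
    (hratio : ∀ u v : E, ‖u - v‖ ≤ r₁ →
      μ₂ * ‖fderiv ℝ f u‖ ≤ μ₁ * ‖fderiv ℝ f v‖ ∧
      lam₁ * ‖fderiv ℝ f v‖ ≤ lam₂ * ‖fderiv ℝ f u‖)
    (x : E) (C : ℝ) (hC : 0 < C)
    (hx : ∀ n : ℕ, 1 ≤ n →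
      C * μ₁ ^ n ≤ ∏ i ∈ Finset.range n, ‖fderiv ℝ f (f^[i] x)‖ ∧
      ∏ i ∈ Finset.range n, ‖fderiv ℝ f (f^[i] x)‖ ≤ C * lam₁ ^ n) :
    ∃ C₀ : ℝ, 0 < C₀ ∧ ∃ r : ℝ, 0 < r ∧ ∀ y : E, ‖y - x‖ ≤ r → ∀ n : ℕ, 1 ≤ n →
      C₀⁻¹ * μ₂ ^ n ≤ ∏ i ∈ Finset.range n, ‖fderiv ℝ f (f^[i] y)‖ ∧
      ∏ i ∈ Finset.range n, ‖fderiv ℝ f (f^[i] y)‖ ≤ C₀ * lam₂ ^ n := by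
  have hμ₁ : 0 < μ₁ := h0.trans h1
  have hl1 : 0 < lam₁ := hμ₁.trans h2
  have hl2 : 0 < lam₂ := hl1.trans h3
  have hdiff : Differentiable ℝ f := hf.differentiable one_ne_zero
  set D : ℕ → ℝ := fun i => ‖fderiv ℝ f (f^[i] x)‖ with hDdef
  have hDnn : ∀ i, 0 ≤ D i := fun i => norm_nonneg _
  set M : ℝ := max 1 C with hM
  have hM0 : (0:ℝ) < M := lt_of_lt_of_le one_pos (le_max_left _ _)
  refine ⟨C + C⁻¹, by positivity, r₁ / M, by positivity, ?_⟩
  intro y hy n hn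
  set P : ℕ → ℝ := fun i => ∏ j ∈ Finset.range i, ((lam₂ / lam₁) * D j) with hPdef
  have hPnn : ∀ i, 0 ≤ P i :=
    fun i => Finset.prod_nonneg (fun j _ => mul_nonneg (by positivity) (hDnn j))
  have hPle : ∀ i, P i ≤ M := by
    intro i
    rcases Nat.eq_zero_or_pos i with rfl | hi
    · simp only [hPdef, Finset.range_zero, Finset.prod_empty]
      exact le_max_left _ _
    · have hub := (hx i hi).2
      have hPeq : P i = (lam₂ / lam₁) ^ i * ∏ j ∈ Finset.range i, D j := by
        simp only [hPdef, Finset.prod_mul_distrib, Finset.prod_const, Finset.card_range]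
      rw [hPeq]
      calc (lam₂ / lam₁) ^ i * ∏ j ∈ Finset.range i, D j
          ≤ (lam₂ / lam₁) ^ i * (C * lam₁ ^ i) :=
            mul_le_mul_of_nonneg_left hub (by positivity)
        _ = C * lam₂ ^ i := by
            rw [div_pow]; field_simp
        _ ≤ C * 1 := by
            apply mul_le_mul_of_nonneg_left _ hC.le
            exact pow_le_one₀ hl2.le h4.le
        _ ≤ M := by rw [mul_one]; exact le_max_right _ _
  have key : ∀ i, ‖f^[i] y - f^[i] x‖ ≤ P i * ‖y - x‖ := by
    intro i
    induction i with
    | zero => simp [hPdef]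
    | succ i ih =>
      have hball : ‖f^[i] y - f^[i] x‖ ≤ r₁ := by
        calc ‖f^[i] y - f^[i] x‖ ≤ P i * ‖y - x‖ := ih
          _ ≤ M * (r₁ / M) := mul_le_mul (hPle i) hy (norm_nonneg _) hM0.le
          _ = r₁ := by field_simp
      have hmvt : ‖f (f^[i] y) - f (f^[i] x)‖
          ≤ ((lam₂ / lam₁) * D i) * ‖f^[i] y - f^[i] x‖ := by
        have hconv : Convex ℝ (Metric.closedBall (f^[i] x) r₁) := convex_closedBall _ _
        refine hconv.norm_image_sub_le_of_norm_fderiv_le (fun u _ => hdiff u) ?_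
          (Metric.mem_closedBall_self hr₁.le) ?_
        · intro u hu
          have hd : ‖f^[i] x - u‖ ≤ r₁ := by
            rw [norm_sub_rev]
            simpa [Metric.mem_closedBall, dist_eq_norm] using hu
          have h2' := (hratio (f^[i] x) u hd).2
          rw [div_mul_eq_mul_div, le_div_iff₀ hl1]
          linarith [h2']
        · simpa [Metric.mem_closedBall, dist_eq_norm] using hball
      calc ‖f^[i+1] y - f^[i+1] x‖ = ‖f (f^[i] y) - f (f^[i] x)‖ := by
            simp [Function.iterate_succ_apply']
        _ ≤ ((lam₂ / lam₁) * D i) * ‖f^[i] y - f^[i] x‖ := hmvt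
        _ ≤ ((lam₂ / lam₁) * D i) * (P i * ‖y - x‖) := by
            apply mul_le_mul_of_nonneg_left ih
            exact mul_nonneg (by positivity) (hDnn i)
        _ = P (i+1) * ‖y - x‖ := by
            simp only [hPdef, Finset.prod_range_succ]; ring
  have hclose : ∀ i, ‖f^[i] y - f^[i] x‖ ≤ r₁ := by
    intro i
    calc ‖f^[i] y - f^[i] x‖ ≤ P i * ‖y - x‖ := key i
      _ ≤ M * (r₁ / M) := mul_le_mul (hPle i) hy (norm_nonneg _) hM0.le
      _ = r₁ := by field_simp
  have hclose' : ∀ i, ‖f^[i] x - f^[i] y‖ ≤ r₁ := by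
    intro i; rw [norm_sub_rev]; exact hclose i
  have hlow : ∀ i, (μ₂ / μ₁) * D i ≤ ‖fderiv ℝ f (f^[i] y)‖ := by
    intro i
    have := (hratio (f^[i] x) (f^[i] y) (hclose' i)).1
    rw [div_mul_eq_mul_div, div_le_iff₀ hμ₁]
    linarith [this]
  have hup : ∀ i, ‖fderiv ℝ f (f^[i] y)‖ ≤ (lam₂ / lam₁) * D i := by
    intro i
    have := (hratio (f^[i] x) (f^[i] y) (hclose' i)).2
    rw [div_mul_eq_mul_div, le_div_iff₀ hl1]
    linarith [this]
  have hinv : (C + C⁻¹)⁻¹ ≤ C := by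
    have h1 : C⁻¹ ≤ C + C⁻¹ := le_add_of_nonneg_left hC.le
    calc (C + C⁻¹)⁻¹ ≤ (C⁻¹)⁻¹ := by
          apply inv_anti₀ (by positivity) h1
      _ = C := inv_inv C
  constructor
  · have step1 : (C + C⁻¹)⁻¹ * μ₂ ^ n ≤ C * μ₂ ^ n :=
      mul_le_mul_of_nonneg_right hinv (by positivity)
    refine step1.trans ?_
    calc C * μ₂ ^ n
        = (μ₂ / μ₁) ^ n * (C * μ₁ ^ n) := by
          rw [div_pow]; field_simp
      _ ≤ (μ₂ / μ₁) ^ n * ∏ i ∈ Finset.range n, D i :=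
          mul_le_mul_of_nonneg_left (hx n hn).1 (by positivity)
      _ = ∏ i ∈ Finset.range n, ((μ₂ / μ₁) * D i) := by
          rw [Finset.prod_mul_distrib, Finset.prod_const, Finset.card_range]
      _ ≤ ∏ i ∈ Finset.range n, ‖fderiv ℝ f (f^[i] y)‖ := by
          refine Finset.prod_le_prod (fun i _ => ?_) (fun i _ => hlow i)
          exact mul_nonneg (by positivity) (hDnn i)
  · have step2 : C * lam₂ ^ n ≤ (C + C⁻¹) * lam₂ ^ n :=
      mul_le_mul_of_nonneg_right (le_add_of_nonneg_right (by positivity)) (by positivity)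
    refine le_trans ?_ step2
    calc ∏ i ∈ Finset.range n, ‖fderiv ℝ f (f^[i] y)‖
        ≤ ∏ i ∈ Finset.range n, ((lam₂ / lam₁) * D i) :=
          Finset.prod_le_prod (fun i _ => norm_nonneg _) (fun i _ => hup i)
      _ = (lam₂ / lam₁) ^ n * ∏ i ∈ Finset.range n, D i := by
          rw [Finset.prod_mul_distrib, Finset.prod_const, Finset.card_range]
      _ ≤ (lam₂ / lam₁) ^ n * (C * lam₁ ^ n) :=
          mul_le_mul_of_nonneg_left (hx n hn).2 (by positivity)
      _ = C * lam₂ ^ n := by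
          rw [div_pow]; field_simp
end

section
/- Let X be a compact metric space, f : X → X a homeomorphism, and a : X → ℝ a continuous function. Let p ∈ X be a fixed point of f and let λ₁, λ₂ be real numbers with a(p) ≤ log λ₁ < log λ₂ < 0. Let x ∈ X be a point such that d(f^n(x), p) → 0 as n → +∞ and d(f^{-n}(x), p) → 0 as n → +∞. Then there exists a constant C ≥ 1 such that for every point y in the set {p} ∪ {f^k(x) : k ∈ ℤ} and every n ∈ ℕ⁺, one has ∑_{i=0}^{n−1} a(f^i(y)) ≤ log C + n·log λ₂. -/
open Filter Finset

/-- Abstract one-bundle hyperbolicity of the orbit of a homoclinic point: if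
`a` is continuous, `a(p) ≤ log λ₁ < log λ₂ < 0` at a fixed point `p`, and the
full orbit of `x` converges to `p` in both forward and backward time, then the
Birkhoff sums of `a` along forward orbits of points of `{p} ∪ Orb(x)` are
bounded by `log C + n·log λ₂`. -/
theorem birkhoff_sums_along_homoclinic_orbit
    {X : Type*} [MetricSpace X] [CompactSpace X]
    (f : X ≃ₜ X) (a : X → ℝ) (ha : Continuous a)
    (p : X) (hp : f p = p) (lam₁ lam₂ : ℝ)
    (h1 : a p ≤ Real.log lam₁) (h2 : Real.log lam₁ < Real.log lam₂)
    (h3 : Real.log lam₂ < 0)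
    (x : X)
    (hforward : Filter.Tendsto (fun n : ℕ => (⇑f)^[n] x) Filter.atTop (nhds p))
    (hbackward : Filter.Tendsto (fun n : ℕ => (⇑f.symm)^[n] x) Filter.atTop (nhds p)) :
    ∃ C : ℝ, 1 ≤ C ∧
      ∀ y ∈ insert p ({z : X | ∃ k : ℕ, z = (⇑f)^[k] x} ∪
        {z : X | ∃ k : ℕ, z = (⇑f.symm)^[k] x}),
        ∀ n : ℕ, 1 ≤ n →
          ∑ i ∈ Finset.range n, a ((⇑f)^[i] y) ≤ Real.log C + (n : ℝ) * Real.log lam₂ := by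
  set L := Real.log lam₂ with hL
  have hap : a p < L := lt_of_le_of_lt h1 h2
  -- upper bound for `a`
  obtain ⟨ymax, -, hB⟩ :=
    isCompact_univ.exists_isMaxOn ⟨p, Set.mem_univ p⟩ ha.continuousOn
  set B := a ymax with hBdef
  have hBb : ∀ y : X, a y ≤ B := fun y => hB (Set.mem_univ y)
  -- eventual bounds along the orbit
  have hfa : Tendsto (fun n : ℕ => a ((⇑f)^[n] x)) atTop (nhds (a p)) :=
    (ha.tendsto p).comp hforward
  have hba : Tendsto (fun n : ℕ => a ((⇑f.symm)^[n] x)) atTop (nhds (a p)) :=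
    (ha.tendsto p).comp hbackward
  obtain ⟨N₁, hN₁⟩ := eventually_atTop.mp (hfa.eventually_lt_const hap)
  obtain ⟨N₂, hN₂⟩ := eventually_atTop.mp (hba.eventually_lt_const hap)
  set N : ℕ := max N₁ N₂ with hNdef
  -- the two-sided orbit
  set z : ℤ → X := fun j => if 0 ≤ j then (⇑f)^[j.toNat] x else (⇑f.symm)^[(-j).toNat] x
    with hzdef
  have hzpos : ∀ k : ℕ, z (k : ℤ) = (⇑f)^[k] x := by
    intro k; simp [hzdef]
  have hzneg : ∀ k : ℕ, z (-(k : ℤ)) = (⇑f.symm)^[k] x := by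
    intro k
    rcases Nat.eq_zero_or_pos k with hk | hk
    · subst hk; simp [hzdef]
    · have hneg : ¬ (0 ≤ -(k : ℤ)) := by omega
      simp [hzdef, hneg]
      omega
  have hz : ∀ j : ℤ, f (z j) = z (j + 1) := by
    intro j
    rcases le_or_gt 0 j with hj | hj
    · obtain ⟨k, rfl⟩ := Int.eq_ofNat_of_zero_le hj
      have e1 : z (k : ℤ) = (⇑f)^[k] x := hzpos k
      have e2 : z ((k : ℤ) + 1) = (⇑f)^[k + 1] x := by
        have := hzpos (k + 1); push_cast at this ⊢; exact this
      rw [e1, e2, Function.iterate_succ_apply']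
    · obtain ⟨k, hk⟩ : ∃ k : ℕ, j = -((k : ℤ) + 1) := ⟨(-j - 1).toNat, by omega⟩
      subst hk
      have e1 : z (-((k : ℤ) + 1)) = (⇑f.symm)^[k + 1] x := by
        have := hzneg (k + 1); push_cast at this ⊢; exact this
      have e2 : z (-((k : ℤ) + 1) + 1) = (⇑f.symm)^[k] x := by
        have := hzneg k; push_cast at this ⊢; convert this using 2; omega
      rw [e1, e2, Function.iterate_succ_apply']
      exact f.apply_symm_apply _
  have hzi : ∀ (m : ℤ) (i : ℕ), (⇑f)^[i] (z m) = z (m + i) := by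
    intro m i
    induction i with
    | zero => simp
    | succ i ih =>
        rw [Function.iterate_succ_apply', ih, hz]
        congr 1
        push_cast; ring
  -- far terms are small
  have hbig : ∀ j : ℤ, (N : ℤ) ≤ |j| → a (z j) ≤ L := by
    intro j hj
    rcases le_or_gt 0 j with hj0 | hj0
    · rw [abs_of_nonneg hj0] at hj
      have e : z j = (⇑f)^[j.toNat] x := by
        rw [← hzpos j.toNat]; congr 1; omega
      rw [e]
      refine le_of_lt (hN₁ j.toNat ?_)
      have hNN : (N₁ : ℤ) ≤ (N : ℤ) := by exact_mod_cast le_max_left N₁ N₂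
      omega
    · rw [abs_of_neg hj0] at hj
      have e : z j = (⇑f.symm)^[(-j).toNat] x := by
        rw [← hzneg (-j).toNat]; congr 1; omega
      rw [e]
      refine le_of_lt (hN₂ (-j).toNat ?_)
      have hNN : (N₂ : ℤ) ≤ (N : ℤ) := by exact_mod_cast le_max_right N₁ N₂
      omega
  set M : ℝ := max (B - L) 0 with hMdef
  have hM : 0 ≤ M := le_max_right _ _
  have hpt : ∀ j : ℤ, a (z j) - L ≤ if |j| < (N : ℤ) then M else 0 := by
    intro j
    split_ifs with hj
    · exact le_trans (by linarith [hBb (z j)]) (le_max_left _ _)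
    · linarith [hbig j (le_of_not_gt hj)]
  -- cardinality of the bad window
  have hcard : ∀ (m : ℤ) (n : ℕ),
      ((range n).filter (fun i : ℕ => |m + (i : ℤ)| < (N : ℤ))).card ≤ 2 * N := by
    intro m n
    have hinj : Set.InjOn (fun i : ℕ => m + (i : ℤ))
        ((range n).filter (fun i : ℕ => |m + (i : ℤ)| < (N : ℤ))) := by
      intro i hi j hj hij; simp only at hij; omega
    have hmaps : ∀ i ∈ (range n).filter (fun i : ℕ => |m + (i : ℤ)| < (N : ℤ)),
        m + (i : ℤ) ∈ Finset.Ioo (-(N : ℤ)) (N : ℤ) := by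
      intro i hi
      simp only [mem_filter] at hi
      simp only [Finset.mem_Ioo]
      exact abs_lt.mp hi.2
    have hle := Finset.card_le_card_of_injOn _ hmaps hinj
    have hc : (Finset.Ioo (-(N : ℤ)) (N : ℤ)).card = ((N : ℤ) - (-(N : ℤ)) - 1).toNat :=
      Int.card_Ioo _ _
    omega
  -- the main sum estimate along the orbit
  have hsum : ∀ (m : ℤ) (n : ℕ),
      ∑ i ∈ range n, a (z (m + i)) ≤ 2 * (N : ℝ) * M + n * L := by
    intro m n
    have hs1 : ∑ i ∈ range n, (a (z (m + i)) - L) ≤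
        ∑ i ∈ range n, (if |m + (i : ℤ)| < (N : ℤ) then M else 0) :=
      Finset.sum_le_sum fun i _ => hpt (m + i)
    have hs2 : ∑ i ∈ range n, (if |m + (i : ℤ)| < (N : ℤ) then M else 0) =
        (((range n).filter (fun i : ℕ => |m + (i : ℤ)| < (N : ℤ))).card : ℝ) * M := by
      rw [← Finset.sum_filter, Finset.sum_const, nsmul_eq_mul]
    have hs3 : (((range n).filter (fun i : ℕ => |m + (i : ℤ)| < (N : ℤ))).card : ℝ) * M
        ≤ 2 * (N : ℝ) * M := by
      refine mul_le_mul_of_nonneg_right ?_ hM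
      exact_mod_cast hcard m n
    have hsplit : ∑ i ∈ range n, a (z (m + i)) =
        (∑ i ∈ range n, (a (z (m + i)) - L)) + n * L := by
      rw [Finset.sum_sub_distrib, Finset.sum_const, card_range, nsmul_eq_mul]; ring
    rw [hsplit]
    linarith [hs1.trans (hs2 ▸ hs3)]
  -- conclusion
  refine ⟨Real.exp (2 * (N : ℝ) * M), Real.one_le_exp (by positivity), ?_⟩
  intro y hy n hn
  rw [Real.log_exp]
  have hC0 : 0 ≤ 2 * (N : ℝ) * M := by positivity
  rcases hy with rfl | hy | hy
  · have hit : ∀ i : ℕ, (⇑f)^[i] y = y := fun i => Function.iterate_fixed hp i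
    have : ∑ i ∈ range n, a ((⇑f)^[i] y) = n * a y := by
      simp [hit, Finset.sum_const, card_range, nsmul_eq_mul]
    rw [this]
    have : (n : ℝ) * a y ≤ n * L :=
      mul_le_mul_of_nonneg_left (le_of_lt hap) (Nat.cast_nonneg n)
    linarith
  · obtain ⟨k, rfl⟩ := hy
    have : ∑ i ∈ range n, a ((⇑f)^[i] ((⇑f)^[k] x)) = ∑ i ∈ range n, a (z (k + i)) := by
      refine Finset.sum_congr rfl fun i _ => ?_
      rw [← hzpos k, hzi]
    rw [this]
    linarith [hsum (k : ℤ) n]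
  · obtain ⟨k, rfl⟩ := hy
    have : ∑ i ∈ range n, a ((⇑f)^[i] ((⇑f.symm)^[k] x)) =
        ∑ i ∈ range n, a (z (-(k : ℤ) + i)) := by
      refine Finset.sum_congr rfl fun i _ => ?_
      rw [← hzneg k, hzi]
    rw [this]
    linarith [hsum (-(k : ℤ)) n]
end
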